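/- If D is a minimal counterexample, then D has no vertex all of whose incoming edges have the same colour, and no vertex all of whose outgoing edges have the same colour. -/

import Mathlib

/-- A 3-coloured tournament on vertex type `V`: between any two distinct
vertices there is exactly one directed edge (`beats`), and `colour x y` gives
the colour (one of three: red, blue, green) of the edge from `x` to `y`
(meaningful when `beats x y` holds). -/
structure CTournament (V : Type*) where
  beats : V → V → Prop
  irrefl : ∀ v, ¬ beats v v
  asymm : ∀ v w, beats v w → ¬ beats w v
  total : ∀ v w, v ≠ w → beats v w ∨ beats w v
  colour : V → V → Fin 3

namespace CTournament

/-- The colour red. -/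
def red : Fin 3 := 0
/-- The colour blue. -/
def blue : Fin 3 := 1
/-- The colour green. -/
def green : Fin 3 := 2

variable {V : Type*} (T : CTournament V)

/-- `x` monochromatically dominates `y` in colour `c`: there is a directed
path (with at least one edge) from `x` to `y` all of whose edges have
colour `c`. -/
def Dom (c : Fin 3) (x y : V) : Prop :=
  Relation.TransGen (fun a b => T.beats a b ∧ T.colour a b = c) x y

/-- `x` monochromatically dominates `y` (in some colour). -/
def MDom (x y : V) : Prop := ∃ c, T.Dom c x y

/-- `x` monochromatically dominates `y` in colour `c` within the
subtournament induced on the vertex set `S`. -/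
def DomIn (S : Set V) (c : Fin 3) (x y : V) : Prop :=
  Relation.TransGen (fun a b => a ∈ S ∧ b ∈ S ∧ T.beats a b ∧ T.colour a b = c) x y

/-- `x` monochromatically dominates `y` within the subtournament induced on `S`. -/
def MDomIn (S : Set V) (x y : V) : Prop := ∃ c, T.DomIn S c x y

/-- `T` contains a `T_3`: three vertices spanning a cyclic triangle whose
three edges have three pairwise distinct colours. -/
def HasT3 : Prop :=
  ∃ a b c : V, T.beats a b ∧ T.beats b c ∧ T.beats c a ∧
    T.colour a b ≠ T.colour b c ∧ T.colour b c ≠ T.colour c a ∧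
    T.colour a b ≠ T.colour c a

/-- Vertex `v` is incident with an edge of colour `c`. -/
def IncidentColour (v : V) (c : Fin 3) : Prop :=
  ∃ w, (T.beats v w ∧ T.colour v w = c) ∨ (T.beats w v ∧ T.colour w v = c)

/-- `T` is a minimal counterexample: it contains no `T_3`, no vertex
monochromatically dominates every other vertex, and every proper nonempty
subset of the vertices spans a subtournament containing a vertex that
monochromatically dominates (within that subtournament) every other vertex
of the subset. -/
def MinimalCex : Prop :=
  ¬ T.HasT3 ∧
  (¬ ∃ x : V, ∀ y, y ≠ x → T.MDom x y) ∧
  ∀ S : Set V, S.Nonempty → S ≠ Set.univ →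
    ∃ x ∈ S, ∀ y ∈ S, y ≠ x → T.MDomIn S x y

/-- The permutation `σ` (sending every vertex to its successor) is a directed
Hamilton cycle of `T`: every vertex beats its successor, and all vertices lie
on a single cycle of `σ`. -/
def IsHamCycle (σ : Equiv.Perm V) : Prop :=
  (∀ v, T.beats v (σ v)) ∧ ∀ v w : V, ∃ n : ℕ, (⇑σ)^[n] v = w

/-- The domination property of the Hamilton cycle `σ`: every vertex
monochromatically dominates every vertex other than itself and its
predecessor on the cycle, and no vertex monochromatically dominates its
predecessor. -/
def HamDomProp (σ : Equiv.Perm V) : Prop :=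
  (∀ x y : V, y ≠ x → y ≠ σ.symm x → T.MDom x y) ∧
  ∀ x : V, ¬ T.MDom x (σ.symm x)

/-- The vertex set of the directed subpath `xCy` of the Hamilton cycle whose
successor permutation is `σ`: all vertices reachable from `x` along the cycle
no later than the first visit of `y`. -/
def PathSet (σ : Equiv.Perm V) (x y : V) : Set V :=
  {z | ∃ k : ℕ, (⇑σ)^[k] x = z ∧ ∀ j < k, (⇑σ)^[j] x ≠ y}

/-- `R^+(x)`: the vertices to which `x` sends a red edge. -/
def Rplus (x : V) : Set V := {v | T.beats x v ∧ T.colour x v = red}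
/-- `R^-(x)`: the vertices from which `x` receives a red edge. -/
def Rminus (x : V) : Set V := {v | T.beats v x ∧ T.colour v x = red}
/-- `B^+(x)`: the vertices to which `x` sends a blue edge. -/
def Bplus (x : V) : Set V := {v | T.beats x v ∧ T.colour x v = blue}
/-- `B^-(x)`: the vertices from which `x` receives a blue edge. -/
def Bminus (x : V) : Set V := {v | T.beats v x ∧ T.colour v x = blue}
/-- `R_r^+(x) = {v ∈ R^+(x) : v monochromatically dominates x in red}`. -/
def Rrplus (x : V) : Set V := {v ∈ T.Rplus x | T.Dom red v x}
/-- `R_r^-(x) = {v ∈ R^-(x) : x monochromatically dominates v in red}`. -/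
def Rrminus (x : V) : Set V := {v ∈ T.Rminus x | T.Dom red x v}
/-- `B_b^+(x) = {v ∈ B^+(x) : v monochromatically dominates x in blue}`. -/
def Bbplus (x : V) : Set V := {v ∈ T.Bplus x | T.Dom blue v x}
/-- `B_b^-(x) = {v ∈ B^-(x) : x monochromatically dominates v in blue}`. -/
def Bbminus (x : V) : Set V := {v ∈ T.Bminus x | T.Dom blue x v}

end CTournament

/-!
Call a vertex dominating all others a king. Since `D` has no king, the king `x` of `V ∖ {w}`
(which exists by minimality) does not dominate `w`; hence `w → x`, and distinct `w` give distinct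
`x`. By finiteness every vertex `v` arises in this way from some `p` with `p → v`: `v` dominates
every vertex except `p`. Let `u` be the king of `V ∖ {v}` and follow a monochromatic path from `u`
to `p`. It starts among the out-neighbours of `v` and ends among its in-neighbours, so one of its
edges `a → b` has `v → a` and `b → v`. The cyclic triangle `v a b` is not a `T_3`, and when all
edges into, or all edges out of, `v` share a colour, each way for two of its colours to agree
yields a forbidden domination: of `p` by `v`, of `v` by `u`, or of every vertex by a single one.
-/

theorem Relation.ReflTransGen.exists_exit {α : Type*} {r : α → α → Prop} {P : α → Prop}
    {x y : α} (hxy : Relation.ReflTransGen r x y) (hx : P x) (hy : ¬ P y) :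
    ∃ a b, Relation.ReflTransGen r x a ∧ r a b ∧ Relation.ReflTransGen r b y ∧
      P a ∧ ¬ P b := by
  induction hxy using Relation.ReflTransGen.head_induction_on with
  | refl => exact absurd hx hy
  | @head x z hxz hzy ih =>
    by_cases hz : P z
    · obtain ⟨a, b, hza, hab, hby, ha, hb⟩ := ih hz
      exact ⟨a, b, .head hxz hza, hab, hby, ha, hb⟩
    · exact ⟨x, z, .refl, hxz, hzy, hx, hz⟩

namespace CTournament

variable {V : Type*} {T : CTournament V}

theorem ne_of_beats {a b : V} (h : T.beats a b) : a ≠ b := by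
  rintro rfl
  exact T.irrefl a h

theorem Dom.exists_first_edge {c : Fin 3} {x y : V} (h : T.Dom c x y) :
    ∃ t, T.beats x t ∧ T.colour x t = c := by
  induction h with
  | single h => exact ⟨_, h⟩
  | tail _ _ ih => exact ih

theorem Dom.exists_last_edge {c : Fin 3} {x y : V} (h : T.Dom c x y) :
    ∃ t, T.beats t y ∧ T.colour t y = c := by
  induction h with
  | single h => exact ⟨_, h⟩
  | tail _ h _ => exact ⟨_, h⟩

theorem MDomIn.mdom {S : Set V} {x y : V} (h : T.MDomIn S x y) : T.MDom x y := by
  obtain ⟨c, hc⟩ := h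
  exact ⟨c, Relation.TransGen.mono (fun _ _ hab => hab.2.2) _ _ hc⟩

theorem colours_not_distinct (hT : ¬ T.HasT3) {a b c : V}
    (hab : T.beats a b) (hbc : T.beats b c) (hca : T.beats c a) :
    T.colour a b = T.colour b c ∨ T.colour b c = T.colour c a ∨
      T.colour a b = T.colour c a := by
  by_contra! hne
  exact hT ⟨a, b, c, hab, hbc, hca, hne⟩

variable (T) in
def IsKingOfCompl (w x : V) : Prop :=
  T.beats w x ∧ ¬ T.MDom x w ∧ ∀ y, y ≠ w → y ≠ x → T.MDom x y

theorem IsKingOfCompl.left_unique {a b x : V} (ha : T.IsKingOfCompl a x)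
    (hb : T.IsKingOfCompl b x) : a = b := by
  by_contra hne
  exact hb.2.1 (ha.2.2 b (Ne.symm hne) (ne_of_beats hb.1))

namespace MinimalCex

theorem exists_ne (h : T.MinimalCex) (w : V) : ∃ y, y ≠ w := by
  by_contra! hw
  exact h.2.1 ⟨w, fun y hy => absurd (hw y) hy⟩

theorem exists_isKingOfCompl (h : T.MinimalCex) (w : V) : ∃ x, T.IsKingOfCompl w x := by
  obtain ⟨y, hy⟩ := h.exists_ne w
  have hS : ({w}ᶜ : Set V) ≠ Set.univ := fun hS =>
    (hS ▸ Set.mem_univ w : w ∈ ({w}ᶜ : Set V)) rfl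
  obtain ⟨x, hxw, hx⟩ := h.2.2 {w}ᶜ ⟨y, hy⟩ hS
  have hx_dom : ∀ y, y ≠ w → y ≠ x → T.MDom x y := fun y hyw hyx => (hx y hyw hyx).mdom
  have hx_w : ¬ T.MDom x w := by
    intro hxw'
    refine h.2.1 ⟨x, fun y hyx => ?_⟩
    by_cases hyw : y = w
    · exact hyw ▸ hxw'
    · exact hx_dom y hyw hyx
  refine ⟨x, ?_, hx_w, hx_dom⟩
  refine (T.total w x (Ne.symm hxw)).resolve_right fun hxw' => hx_w ?_
  exact ⟨T.colour x w, .single ⟨hxw', rfl⟩⟩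

theorem exists_isKingOfCompl_left [Finite V] (h : T.MinimalCex) (x : V) :
    ∃ w, T.IsKingOfCompl w x := by
  choose f hf using h.exists_isKingOfCompl
  have hf_inj : Function.Injective f := fun a b hab => (hf a).left_unique (hab ▸ hf b)
  obtain ⟨w, rfl⟩ := Finite.injective_iff_surjective.mp hf_inj x
  exact ⟨w, hf w⟩

theorem not_forall_colour_in_eq [Finite V] (h : T.MinimalCex) (v : V) (c : Fin 3) :
    ¬ ∀ w, T.beats w v → T.colour w v = c := by
  intro hc
  have dom_colour : ∀ {e x}, T.Dom e x v → e = c := fun hx => by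
    obtain ⟨t, ht, rfl⟩ := hx.exists_last_edge
    exact hc t ht
  -- the king of `V ∖ {z}` reaches `v`, necessarily in colour `c`, and could continue to `z`
  have no_out_c : ∀ z, T.beats v z → T.colour v z ≠ c := by
    intro z hvz hvzc
    obtain ⟨x, -, hx_z, hx⟩ := h.exists_isKingOfCompl z
    have hxv : x ≠ v := by
      rintro rfl
      exact hx_z ⟨c, .single ⟨hvz, hvzc⟩⟩
    obtain ⟨e, he⟩ := hx v (ne_of_beats hvz) hxv.symm
    obtain rfl := dom_colour he
    exact hx_z ⟨e, he.tail ⟨hvz, hvzc⟩⟩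
  obtain ⟨u, hvu, hu_v, hu⟩ := h.exists_isKingOfCompl v
  obtain ⟨p, hpv, hv_p, -⟩ := h.exists_isKingOfCompl_left v
  obtain ⟨β, hβ⟩ := hu p (ne_of_beats hpv) (by rintro rfl; exact T.asymm _ _ hpv hvu)
  have hβc : β ≠ c := by
    rintro rfl
    exact hu_v ⟨β, hβ.tail ⟨hpv, hc p hpv⟩⟩
  obtain ⟨a, b, -, hab, hbp, hva, hvb⟩ :=
    hβ.to_reflTransGen.exists_exit (P := T.beats v) hvu (T.asymm _ _ hpv)
  have hbv : T.beats b v := by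
    refine (T.total b v ?_).resolve_right hvb
    rintro rfl
    exact hβc (hab.2.symm.trans (hc a hab.1))
  rcases colours_not_distinct h.1 hva hab.1 hbv with hβ' | hcβ | hc'
  · exact hv_p ⟨β, .head ⟨hva, hβ'.trans hab.2⟩ (.head' hab hbp)⟩
  · exact hβc (hab.2.symm.trans (hcβ.trans (hc b hbv)))
  · exact no_out_c a hva (hc'.trans (hc b hbv))

theorem not_forall_colour_out_eq [Finite V] (h : T.MinimalCex) (v : V) (c : Fin 3) :
    ¬ ∀ w, T.beats v w → T.colour v w = c := by
  intro hc
  have dom_colour : ∀ {e y}, T.Dom e v y → e = c := fun hy => by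
    obtain ⟨t, ht, rfl⟩ := hy.exists_first_edge
    exact hc t ht
  obtain ⟨p, hpv, hv_p, hv⟩ := h.exists_isKingOfCompl_left v
  have hv_c : ∀ y, y ≠ p → y ≠ v → T.Dom c v y := fun y hyp hyv => by
    obtain ⟨e, he⟩ := hv y hyp hyv
    obtain rfl := dom_colour he
    exact he
  have not_king : ∀ x, T.Dom c x v → (p = x ∨ T.MDom x p) → False := by
    intro x hxv hxp
    refine h.2.1 ⟨x, fun y hyx => ?_⟩
    by_cases hyv : y = v
    · exact hyv ▸ ⟨c, hxv⟩
    by_cases hyp : y = p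
    · subst hyp
      exact hxp.resolve_left hyx
    · exact ⟨c, hxv.trans (hv_c y hyp hyv)⟩
  obtain ⟨u, hvu, hu_v, hu⟩ := h.exists_isKingOfCompl v
  obtain ⟨d, hd⟩ := hu p (ne_of_beats hpv) (by rintro rfl; exact T.asymm _ _ hpv hvu)
  have hdc : d ≠ c := by
    rintro rfl
    obtain ⟨s, hsp, hsc⟩ := hd.exists_last_edge
    have hsv : s ≠ v := by
      rintro rfl
      exact hv_p ⟨d, .single ⟨hsp, hsc⟩⟩
    exact hv_p ⟨d, (hv_c s (ne_of_beats hsp) hsv).tail ⟨hsp, hsc⟩⟩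
  obtain ⟨a, b, hua, hab, hbp, hva, hvb⟩ :=
    hd.to_reflTransGen.exists_exit (P := T.beats v) hvu (T.asymm _ _ hpv)
  have hbp' : p = b ∨ T.Dom d b p := Relation.reflTransGen_iff_eq_or_transGen.mp hbp
  have hbv : T.beats b v := by
    refine (T.total b v ?_).resolve_right hvb
    rintro rfl
    exact hdc (dom_colour (hbp'.resolve_left (ne_of_beats hpv)))
  rcases colours_not_distinct h.1 hva hab.1 hbv with hcd | hd' | hc'
  · exact hdc (hab.2.symm.trans (hcd.symm.trans (hc a hva)))
  · exact hu_v ⟨d, (Relation.TransGen.tail' hua hab).tail ⟨hbv, hd'.symm.trans hab.2⟩⟩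
  · exact not_king b (.single ⟨hbv, hc'.symm.trans (hc a hva)⟩)
      (hbp'.imp_right fun hbp => ⟨d, hbp⟩)

end MinimalCex

end CTournament

/-- A minimal counterexample has no vertex all of whose incoming
edges have the same colour, and no vertex all of whose outgoing edges have the
same colour. -/
theorem minimalCex_no_monochromatic_star {V : Type*} [Fintype V] (T : CTournament V)
    (h : T.MinimalCex) :
    (∀ v : V, ¬ ∃ c : Fin 3, ∀ w, T.beats w v → T.colour w v = c) ∧
    (∀ v : V, ¬ ∃ c : Fin 3, ∀ w, T.beats v w → T.colour v w = c) :=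
  ⟨fun v ⟨c, hc⟩ => h.not_forall_colour_in_eq v c hc,
    fun v ⟨c, hc⟩ => h.not_forall_colour_out_eq v c hc⟩
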